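/- arXiv:2601.08727 — 7 statements merged into one kernel-verified Lean document; each statement's English description precedes it below -/
import Mathlib

section
/- For every Boolean function f: {0,1}^n → {0,1}, rdeg(f) = max(ndeg(f), ndeg(¬f)), where ¬f denotes the pointwise negation of f. -/
open MvPolynomial

/-- A real multivariate polynomial is multilinear if every variable occurs with degree ≤ 1. -/
def Multilinear {σ : Type*} (p : MvPolynomial σ ℝ) : Prop :=
  ∀ i, MvPolynomial.degreeOf i p ≤ 1

/-- Evaluation of a polynomial at a Boolean point (true ↦ 1, false ↦ 0). -/
noncomputable def evalB {σ : Type*} (x : σ → Bool) (p : MvPolynomial σ ℝ) : ℝ :=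
  MvPolynomial.eval (fun i => if x i then (1:ℝ) else 0) p

/-- The real value of a Boolean (true ↦ 1, false ↦ 0). -/
def bval (b : Bool) : ℝ := if b then 1 else 0

/-- The rational degree of a Boolean function: the minimum of max(deg p, deg q) over all
rational representations p/q of f by multilinear real polynomials. -/
noncomputable def rdeg {n : ℕ} (f : (Fin n → Bool) → Bool) : ℕ :=
  sInf {d | ∃ p q : MvPolynomial (Fin n) ℝ, Multilinear p ∧ Multilinear q ∧
    (∀ x, evalB x q ≠ 0 ∧ evalB x p / evalB x q = bval (f x)) ∧
    max p.totalDegree q.totalDegree = d}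

/-- The nondeterministic degree of a Boolean function: the minimum degree of a multilinear
real polynomial that is nonzero exactly on f⁻¹(1). -/
noncomputable def ndeg {n : ℕ} (f : (Fin n → Bool) → Bool) : ℕ :=
  sInf {d | ∃ p : MvPolynomial (Fin n) ℝ, Multilinear p ∧
    (∀ x, evalB x p ≠ 0 ↔ f x = true) ∧ p.totalDegree = d}

/-! If `p` and `q` are nondeterministic representations of `f` and `¬f`, they have disjoint
supports covering the cube, so `p / (p + q)` represents `f`. Conversely, if `p / q` represents
`f`, then `p = f·q` on the cube, so `p` and `q - p = (¬f)·q` are nondeterministic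
representations of `f` and `¬f`. Minimal representations exist because the multilinear extension
of `f` is a nondeterministic representation. -/

section Representations

variable {σ : Type*}

lemma bval_ne_zero_iff {b : Bool} : bval b ≠ 0 ↔ b = true := by
  cases b <;> simp [bval]

lemma bval_not (b : Bool) : bval (!b) = 1 - bval b := by
  cases b <;> simp [bval]

lemma evalB_add (x : σ → Bool) (p q : MvPolynomial σ ℝ) :
    evalB x (p + q) = evalB x p + evalB x q :=
  map_add _ p q

lemma evalB_sub (x : σ → Bool) (p q : MvPolynomial σ ℝ) :
    evalB x (p - q) = evalB x p - evalB x q :=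
  map_sub _ p q

lemma evalB_sum {ι : Type*} (x : σ → Bool) (s : Finset ι) (p : ι → MvPolynomial σ ℝ) :
    evalB x (∑ i ∈ s, p i) = ∑ i ∈ s, evalB x (p i) :=
  map_sum _ p s

lemma evalB_prod {ι : Type*} (x : σ → Bool) (s : Finset ι) (p : ι → MvPolynomial σ ℝ) :
    evalB x (∏ i ∈ s, p i) = ∏ i ∈ s, evalB x (p i) :=
  map_prod _ p s

lemma Multilinear.add {p q : MvPolynomial σ ℝ} (hp : Multilinear p) (hq : Multilinear q) :
    Multilinear (p + q) :=
  fun i => (degreeOf_add_le i p q).trans (max_le (hp i) (hq i))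

lemma Multilinear.sub {p q : MvPolynomial σ ℝ} (hp : Multilinear p) (hq : Multilinear q) :
    Multilinear (p - q) :=
  fun i => (degreeOf_sub_le i p q).trans (max_le (hp i) (hq i))

def IsNondetRep (f : (σ → Bool) → Bool) (p : MvPolynomial σ ℝ) : Prop :=
  Multilinear p ∧ ∀ x, evalB x p ≠ 0 ↔ f x = true

def IsRationalRep (f : (σ → Bool) → Bool) (p q : MvPolynomial σ ℝ) : Prop :=
  Multilinear p ∧ Multilinear q ∧ ∀ x, evalB x q ≠ 0 ∧ evalB x p / evalB x q = bval (f x)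

variable {f : (σ → Bool) → Bool} {p q : MvPolynomial σ ℝ}

lemma IsNondetRep.isRationalRep_add (hp : IsNondetRep f p)
    (hq : IsNondetRep (fun x => !f x) q) : IsRationalRep f p (p + q) := by
  refine ⟨hp.1, hp.1.add hq.1, fun x => ?_⟩
  have hpx := hp.2 x
  have hqx := hq.2 x
  rw [evalB_add]
  cases hfx : f x
  · have hp0 : evalB x p = 0 := by simpa [hfx] using hpx
    have hq0 : evalB x q ≠ 0 := by simpa [hfx] using hqx
    simp [hp0, hq0, bval]
  · have hp0 : evalB x p ≠ 0 := by simpa [hfx] using hpx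
    have hq0 : evalB x q = 0 := by simpa [hfx] using hqx
    simp [hp0, hq0, bval]

lemma IsRationalRep.evalB_eq (h : IsRationalRep f p q) (x : σ → Bool) :
    evalB x p = bval (f x) * evalB x q := by
  obtain ⟨hq0, hdiv⟩ := h.2.2 x
  rw [← hdiv, div_mul_cancel₀ _ hq0]

lemma IsRationalRep.isNondetRep (h : IsRationalRep f p q) : IsNondetRep f p := by
  refine ⟨h.1, fun x => ?_⟩
  rw [h.evalB_eq x, mul_ne_zero_iff, bval_ne_zero_iff]
  exact and_iff_left (h.2.2 x).1

lemma IsRationalRep.isNondetRep_sub (h : IsRationalRep f p q) :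
    IsNondetRep (fun x => !f x) (q - p) := by
  refine ⟨h.2.1.sub h.1, fun x => ?_⟩
  have hqp : evalB x (q - p) = bval (!f x) * evalB x q := by
    rw [evalB_sub, h.evalB_eq x, bval_not]
    ring
  rw [hqp, mul_ne_zero_iff, bval_ne_zero_iff]
  exact and_iff_left (h.2.2 x).1

end Representations

section MultilinearExtension

variable {σ : Type*} [Fintype σ]

noncomputable def indicatorPoly (x : σ → Bool) : MvPolynomial σ ℝ :=
  ∏ i, if x i then X i else 1 - X i

lemma evalB_indicatorPoly (x y : σ → Bool) :
    evalB y (indicatorPoly x) = if y = x then 1 else 0 := by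
  have hfactor : ∀ i, evalB y (if x i then X i else 1 - X i) = if y i = x i then 1 else 0 := by
    intro i
    cases x i <;> cases hy : y i <;> simp [evalB, hy]
  rw [indicatorPoly, evalB_prod]
  simp only [hfactor, Finset.prod_boole, Finset.mem_univ, forall_const]
  simp only [_root_.funext_iff]

lemma multilinear_indicatorPoly (x : σ → Bool) : Multilinear (indicatorPoly x) := by
  classical
  intro j
  have hfactor : ∀ i, degreeOf j (if x i then X i else 1 - X i : MvPolynomial σ ℝ) ≤
      degreeOf j (X i : MvPolynomial σ ℝ) := by
    intro i
    cases x i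
    · simpa [degreeOf_one] using degreeOf_sub_le j (1 : MvPolynomial σ ℝ) (X i)
    · exact le_rfl
  calc degreeOf j (indicatorPoly x)
      ≤ ∑ i, degreeOf j (if x i then X i else 1 - X i : MvPolynomial σ ℝ) :=
        degreeOf_prod_le j _ _
    _ ≤ ∑ i, degreeOf j (X i : MvPolynomial σ ℝ) := Finset.sum_le_sum fun i _ => hfactor i
    _ = 1 := by simp [degreeOf_X]

variable [DecidableEq σ]

noncomputable def multilinearExtension (f : (σ → Bool) → Bool) : MvPolynomial σ ℝ :=
  ∑ x ∈ Finset.univ.filter (fun x => f x = true), indicatorPoly x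

lemma evalB_multilinearExtension (f : (σ → Bool) → Bool) (y : σ → Bool) :
    evalB y (multilinearExtension f) = bval (f y) := by
  rw [multilinearExtension, evalB_sum]
  simp only [evalB_indicatorPoly]
  rw [Finset.sum_ite_eq]
  simp only [Finset.mem_filter, Finset.mem_univ, true_and, bval]

lemma isNondetRep_multilinearExtension (f : (σ → Bool) → Bool) :
    IsNondetRep f (multilinearExtension f) := by
  refine ⟨fun j => (degreeOf_sum_le j _ _).trans
    (Finset.sup_le fun x _ => multilinear_indicatorPoly x j), fun y => ?_⟩
  rw [evalB_multilinearExtension, bval_ne_zero_iff]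

end MultilinearExtension

section Degrees

variable {n : ℕ} {f : (Fin n → Bool) → Bool}

lemma ndeg_eq_sInf (f : (Fin n → Bool) → Bool) :
    ndeg f = sInf {d | ∃ p, IsNondetRep f p ∧ p.totalDegree = d} := by
  simp only [ndeg, IsNondetRep, and_assoc]

lemma rdeg_eq_sInf (f : (Fin n → Bool) → Bool) :
    rdeg f = sInf {d | ∃ p q, IsRationalRep f p q ∧ max p.totalDegree q.totalDegree = d} := by
  simp only [rdeg, IsRationalRep, and_assoc]

lemma ndeg_le {p : MvPolynomial (Fin n) ℝ} (hp : IsNondetRep f p) : ndeg f ≤ p.totalDegree :=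
  ndeg_eq_sInf f ▸ Nat.sInf_le ⟨p, hp, rfl⟩

lemma exists_isNondetRep_totalDegree_eq_ndeg (f : (Fin n → Bool) → Bool) :
    ∃ p, IsNondetRep f p ∧ p.totalDegree = ndeg f := by
  rw [ndeg_eq_sInf]
  exact Nat.sInf_mem (s := {d | ∃ p, IsNondetRep f p ∧ p.totalDegree = d})
    ⟨_, _, isNondetRep_multilinearExtension f, rfl⟩

lemma rdeg_le {p q : MvPolynomial (Fin n) ℝ} (h : IsRationalRep f p q) :
    rdeg f ≤ max p.totalDegree q.totalDegree :=
  rdeg_eq_sInf f ▸ Nat.sInf_le ⟨p, q, h, rfl⟩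

lemma exists_isRationalRep_max_totalDegree_eq_rdeg {p q : MvPolynomial (Fin n) ℝ}
    (h : IsRationalRep f p q) :
    ∃ p q, IsRationalRep f p q ∧ max p.totalDegree q.totalDegree = rdeg f := by
  rw [rdeg_eq_sInf]
  exact Nat.sInf_mem
    (s := {d | ∃ p q, IsRationalRep f p q ∧ max p.totalDegree q.totalDegree = d})
    ⟨_, p, q, h, rfl⟩

end Degrees

/-- For every Boolean function f : {0,1}^n → {0,1}, rdeg(f) = max(ndeg(f), ndeg(¬f)). -/
theorem stmt_3 (n : ℕ) (f : (Fin n → Bool) → Bool) :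
    rdeg f = max (ndeg f) (ndeg (fun x => !(f x))) := by
  obtain ⟨p, hp, hpd⟩ := exists_isNondetRep_totalDegree_eq_ndeg f
  obtain ⟨q, hq, hqd⟩ := exists_isNondetRep_totalDegree_eq_ndeg (fun x => !f x)
  have hpq : IsRationalRep f p (p + q) := hp.isRationalRep_add hq
  apply le_antisymm
  · calc rdeg f ≤ max p.totalDegree (p + q).totalDegree := rdeg_le hpq
      _ ≤ max p.totalDegree (max p.totalDegree q.totalDegree) :=
        max_le_max le_rfl (totalDegree_add p q)
      _ = max (ndeg f) (ndeg (fun x => !(f x))) := by rw [hpd, hqd, ← max_assoc, max_self]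
  · obtain ⟨P, Q, hPQ, hd⟩ := exists_isRationalRep_max_totalDegree_eq_rdeg hpq
    rw [← hd]
    refine max_le ((ndeg_le hPQ.isNondetRep).trans (le_max_left _ _)) ?_
    calc ndeg (fun x => !(f x)) ≤ (Q - P).totalDegree := ndeg_le hPQ.isNondetRep_sub
      _ ≤ max Q.totalDegree P.totalDegree := totalDegree_sub Q P
      _ = max P.totalDegree Q.totalDegree := max_comm _ _
end

section
/- For every Boolean function f: {0,1}^n → {0,1}, sdeg(f) ≤ 2·rdeg(f). -/
/-!
If `p / q` represents `f` on the cube, then `q (q - 2p)` equals `q²` where `f = 0` and `-q²` where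
`f = 1`, so it sign-represents `f` with degree at most `2 · max (deg p) (deg q)`. Since `x ^ k = x`
on `{0, 1}` for `k ≥ 1`, capping every exponent at `1` makes it multilinear without changing its
values on the cube or raising its degree.
-/

open MvPolynomial

/-- The sign degree of a Boolean function: the minimum degree of a multilinear real
polynomial that is nonzero on the cube and negative exactly on f⁻¹(1). -/
noncomputable def sdeg {n : ℕ} (f : (Fin n → Bool) → Bool) : ℕ :=
  sInf {d | ∃ p : MvPolynomial (Fin n) ℝ, Multilinear p ∧ (∀ x, evalB x p ≠ 0) ∧
    (∀ x, evalB x p < 0 ↔ f x = true) ∧ p.totalDegree = d}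

noncomputable def multilinearization {σ : Type*} (p : MvPolynomial σ ℝ) : MvPolynomial σ ℝ :=
  ∑ s ∈ p.support, monomial (s.mapRange (fun e => min e 1) (by simp)) (coeff s p)

section Multilinearization

variable {σ : Type*}

lemma multilinear_multilinearization (p : MvPolynomial σ ℝ) :
    Multilinear (multilinearization p) := by
  classical
  intro i
  rw [degreeOf_le_iff]
  intro m hm
  obtain ⟨s, -, hs⟩ := Finset.mem_biUnion.mp (support_sum hm)
  rw [Finset.mem_singleton.mp (support_monomial_subset hs)]
  simp [Finsupp.mapRange_apply]

lemma totalDegree_multilinearization_le (p : MvPolynomial σ ℝ) :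
    (multilinearization p).totalDegree ≤ p.totalDegree := by
  refine (totalDegree_finsetSum _ _).trans (Finset.sup_le fun s hs => ?_)
  refine (totalDegree_monomial_le _ _).trans (le_trans ?_ (le_totalDegree hs))
  rw [Finsupp.sum_mapRange_index (by simp)]
  exact Finsupp.sum_le_sum fun i _ => min_le_left _ _

lemma evalB_multilinearization (x : σ → Bool) (p : MvPolynomial σ ℝ) :
    evalB x (multilinearization p) = evalB x p := by
  unfold evalB multilinearization
  conv_rhs => rw [p.as_sum]
  rw [map_sum, map_sum]
  refine Finset.sum_congr rfl fun s _ => ?_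
  rw [eval_monomial, eval_monomial, Finsupp.prod_mapRange_index (by simp)]
  refine congrArg _ (Finsupp.prod_congr fun i _ => ?_)
  cases x i <;> cases s i <;> simp

end Multilinearization

lemma evalB_prod_indicator {σ : Type*} [Fintype σ] [DecidableEq σ] (a x : σ → Bool) :
    evalB x (∏ i, if a i then X i else 1 - X i) = if a = x then 1 else 0 := by
  rw [evalB, map_prod]
  split_ifs with h
  · subst h
    refine Finset.prod_eq_one fun i _ => ?_
    cases h : a i <;> simp [h]
  · obtain ⟨i, hi⟩ := Function.ne_iff.mp h
    refine Finset.prod_eq_zero (Finset.mem_univ i) ?_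
    cases hx : x i <;> cases ha : a i <;> simp_all

lemma exists_multilinear_evalB_eq {σ : Type*} [Fintype σ] (g : (σ → Bool) → ℝ) :
    ∃ p : MvPolynomial σ ℝ, Multilinear p ∧ ∀ x, evalB x p = g x := by
  classical
  refine ⟨multilinearization (∑ a, C (g a) * ∏ i, if a i then X i else 1 - X i),
    multilinear_multilinearization _, fun x => ?_⟩
  have hind := fun a => evalB_prod_indicator a x
  rw [evalB_multilinearization]
  simp only [evalB] at hind ⊢
  simp [hind]

lemma exists_rational_representation_of_degree_rdeg {n : ℕ} (f : (Fin n → Bool) → Bool) :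
    ∃ p q : MvPolynomial (Fin n) ℝ, Multilinear p ∧ Multilinear q ∧
      (∀ x, evalB x q ≠ 0 ∧ evalB x p / evalB x q = bval (f x)) ∧
      max p.totalDegree q.totalDegree = rdeg f := by
  obtain ⟨p, hp, hpf⟩ := exists_multilinear_evalB_eq fun x => bval (f x)
  have hne : {d | ∃ p q : MvPolynomial (Fin n) ℝ, Multilinear p ∧ Multilinear q ∧
      (∀ x, evalB x q ≠ 0 ∧ evalB x p / evalB x q = bval (f x)) ∧
      max p.totalDegree q.totalDegree = d}.Nonempty :=
    ⟨_, p, 1, hp, fun i => by simp [degreeOf_one], fun x => by simp [evalB, ← hpf x], rfl⟩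
  exact Nat.sInf_mem hne

lemma sdeg_le_totalDegree {n : ℕ} (f : (Fin n → Bool) → Bool) (r : MvPolynomial (Fin n) ℝ)
    (hr : ∀ x, evalB x r ≠ 0) (hrf : ∀ x, evalB x r < 0 ↔ f x = true) :
    sdeg f ≤ r.totalDegree := by
  calc sdeg f ≤ (multilinearization r).totalDegree :=
        Nat.sInf_le ⟨multilinearization r, multilinear_multilinearization r,
          by simpa only [evalB_multilinearization] using hr,
          by simpa only [evalB_multilinearization] using hrf, rfl⟩
    _ ≤ r.totalDegree := totalDegree_multilinearization_le r

lemma mul_sub_two_mul_sign {a b : ℝ} {t : Bool} (hb : b ≠ 0) (h : a / b = bval t) :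
    b * (b - 2 * a) ≠ 0 ∧ (b * (b - 2 * a) < 0 ↔ t = true) := by
  rw [div_eq_iff hb] at h
  have key : b * (b - 2 * a) = (1 - 2 * bval t) * (b * b) := by rw [h]; ring
  have hb2 : 0 < b * b := mul_self_pos.mpr hb
  cases t
  · simp [key, bval, hb, mul_self_nonneg]
  · norm_num [key, bval, hb, hb2]

/-- For every Boolean function f : {0,1}^n → {0,1}, sdeg(f) ≤ 2·rdeg(f). -/
theorem stmt_4 (n : ℕ) (f : (Fin n → Bool) → Bool) :
    sdeg f ≤ 2 * rdeg f := by
  obtain ⟨p, q, -, -, hpq, hdeg⟩ := exists_rational_representation_of_degree_rdeg f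
  have hsign : ∀ x, evalB x (q * (q - C 2 * p)) ≠ 0 ∧
      (evalB x (q * (q - C 2 * p)) < 0 ↔ f x = true) := fun x => by
    have hev : evalB x (q * (q - C 2 * p)) = evalB x q * (evalB x q - 2 * evalB x p) := by
      simp only [evalB, map_mul, map_sub, eval_C]
    rw [hev]
    exact mul_sub_two_mul_sign (hpq x).1 (hpq x).2
  calc sdeg f ≤ (q * (q - C 2 * p)).totalDegree :=
        sdeg_le_totalDegree f _ (fun x => (hsign x).1) (fun x => (hsign x).2)
    _ ≤ q.totalDegree + max q.totalDegree (C 2 * p).totalDegree :=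
        (totalDegree_mul _ _).trans (Nat.add_le_add_left (totalDegree_sub _ _) _)
    _ ≤ 2 * rdeg f := by
        have h2p : (C 2 * p).totalDegree ≤ p.totalDegree :=
          (totalDegree_mul _ _).trans (by rw [totalDegree_C, zero_add])
        omega
end

section
/- For every nonconstant Boolean function f: {0,1}^n → {0,1}, there exists x ∈ f^{-1}(0) such that bs_x(f) ≤ 2·ndeg(¬f)^2, where ¬f denotes the pointwise negation of f. -/
/-- `flipSet x B` is `x` with all bits in `B` flipped. -/
def flipSet {n : ℕ} (x : Fin n → Bool) (B : Finset (Fin n)) : Fin n → Bool :=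
  fun i => if i ∈ B then !(x i) else x i

/-- The block sensitivity of `f` at `x`: the maximum number of pairwise disjoint
sensitive blocks of `f` at `x`. -/
noncomputable def bs {n : ℕ} (f : (Fin n → Bool) → Bool) (x : Fin n → Bool) : ℕ :=
  sSup {k | ∃ Bs : Fin k → Finset (Fin n),
    (∀ i, f (flipSet x (Bs i)) ≠ f x) ∧ (∀ i j, i ≠ j → Disjoint (Bs i) (Bs j))}

open Finset

namespace Polynomial

theorem abs_derivative_eval_zero_le {d : ℕ} {P : ℝ[X]} {M : ℝ} (hM : 0 < M)
    (hdeg : P.natDegree ≤ d) (hP : ∀ t ∈ Set.Icc (0 : ℝ) 1, |P.eval t| ≤ M) :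
    |(derivative P).eval 0| ≤ 2 * d ^ 2 * M := by
  -- `Q u = P ((1 - u) / 2) / M` is bounded by `1` on `[-1, 1]`; apply Markov's inequality at `1`.
  set Q : ℝ[X] := C M⁻¹ * P.comp (C 2⁻¹ - C 2⁻¹ * X)
  have hQdeg : Q.degree ≤ d := by
    refine degree_le_of_natDegree_le ((natDegree_C_mul_le _ _).trans ?_)
    have : (C (2⁻¹ : ℝ) - C 2⁻¹ * X).natDegree ≤ 1 := by compute_degree
    exact natDegree_comp_le.trans (by nlinarith)
  have hQ : ∀ u ∈ Set.Icc (-1 : ℝ) 1, |Q.eval u| ≤ 1 := by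
    rintro u ⟨hu₁, hu₂⟩
    simp only [Q, eval_mul, eval_C, eval_comp, eval_sub, eval_X, abs_mul, abs_inv, abs_of_pos hM]
    rw [inv_mul_le_one₀ hM]
    exact hP _ ⟨by linarith, by linarith⟩
  have hQ' : (derivative Q).eval 1 = -(derivative P).eval 0 / (2 * M) := by
    simp only [Q, derivative_C_mul, derivative_comp, eval_mul, eval_C, eval_comp, derivative_sub,
      derivative_C, derivative_X, eval_sub, eval_X, zero_sub, mul_one, sub_self, eval_neg]
    field_simp
  have hT : (derivative (Chebyshev.T ℝ d)).eval 1 = d ^ 2 := by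
    simpa using Chebyshev.derivative_T_eval_one (R := ℝ) d
  have hle := Chebyshev.eval_iterate_derivative_le_of_forall_abs_le_one (k := 1) le_rfl hQdeg hQ
  have hge := Chebyshev.eval_iterate_derivative_le_of_forall_abs_le_one (k := 1) le_rfl
    (P := -Q) (by rwa [degree_neg]) (by simpa using hQ)
  simp only [Function.iterate_one, derivative_neg, eval_neg, hQ', hT, neg_div, neg_neg] at hle hge
  rw [← neg_div, div_le_iff₀ (by positivity)] at hle
  rw [div_le_iff₀ (by positivity)] at hge
  rw [abs_le]
  constructor <;> linarith

theorem sum_superset_pow_mul_one_sub_pow {R : Type*} [CommRing R] {k : ℕ} (t : R)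
    (S : Finset (Fin k)) :
    ∑ T with S ⊆ T, t ^ #T * (1 - t) ^ (k - #T) = t ^ #S := by
  have h := Fintype.prod_add (fun _ : Fin k => t) (fun i => if i ∉ S then 1 - t else 0)
  have hfactor : ∀ i : Fin k, t + (if i ∉ S then 1 - t else 0) = if i ∈ S then t else 1 := by
    intro i; split_ifs <;> ring
  simp only [hfactor, prod_ite_mem, univ_inter, prod_const, prod_ite_zero] at h
  rw [h, sum_filter]
  refine sum_congr rfl fun T _ => ?_
  have hsub : (∀ i ∈ Tᶜ, i ∉ S) ↔ S ⊆ T := by grind [mem_compl]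
  simp only [hsub, card_compl, Fintype.card_fin]
  split_ifs <;> simp

/-- The mean of `F T` over a random `T ⊆ Fin k` containing each element independently with
probability `t`, as a polynomial in `t`. -/
noncomputable def subsetMean {k : ℕ} (F : Finset (Fin k) → ℝ) : ℝ[X] :=
  ∑ T, C (F T) * X ^ #T * (1 - X) ^ (k - #T)

theorem abs_eval_subsetMean_le {k : ℕ} {F : Finset (Fin k) → ℝ} {M : ℝ} (hF : ∀ T, |F T| ≤ M)
    {t : ℝ} (ht : t ∈ Set.Icc (0 : ℝ) 1) : |(subsetMean F).eval t| ≤ M := by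
  have hw : ∀ T : Finset (Fin k), 0 ≤ t ^ #T * (1 - t) ^ (k - #T) := fun T =>
    mul_nonneg (pow_nonneg ht.1 _) (pow_nonneg (sub_nonneg.2 ht.2) _)
  have hsum := sum_superset_pow_mul_one_sub_pow t (∅ : Finset (Fin k))
  simp only [empty_subset, filter_true, card_empty, pow_zero] at hsum
  calc |(subsetMean F).eval t|
      ≤ ∑ T : Finset (Fin k), |F T| * (t ^ #T * (1 - t) ^ (k - #T)) := by
        simp only [subsetMean, eval_finsetSum, eval_mul, eval_C, eval_pow, eval_X, eval_sub,
          eval_one, mul_assoc]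
        refine (abs_sum_le_sum_abs _ _).trans_eq (sum_congr rfl fun T _ => ?_)
        rw [abs_mul, abs_of_nonneg (hw T)]
    _ ≤ ∑ T : Finset (Fin k), M * (t ^ #T * (1 - t) ^ (k - #T)) :=
        sum_le_sum fun T _ => mul_le_mul_of_nonneg_right (hF T) (hw T)
    _ = M := by rw [← mul_sum, hsum, mul_one]

theorem derivative_X_pow_mul_one_sub_X_pow_eval_zero {R : Type*} [CommRing R] (c e : ℕ) :
    (derivative ((X : R[X]) ^ c * (1 - X) ^ e)).eval 0 =
      if c = 1 then 1 else if c = 0 then -(e : R) else 0 := by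
  rcases c with _ | _ | c <;> simp [derivative_mul, derivative_pow]

theorem derivative_subsetMean_eval_zero {k : ℕ} (F : Finset (Fin k) → ℝ) :
    (derivative (subsetMean F)).eval 0 = ∑ j, F {j} - k * F ∅ := by
  simp only [subsetMean, mul_assoc, derivative_sum, derivative_C_mul, eval_finsetSum, eval_mul,
    eval_C, derivative_X_pow_mul_one_sub_X_pow_eval_zero, mul_ite, mul_one, mul_zero, sum_ite,
    sum_const_zero, add_zero]
  have h₁ : ({T | #T = 1} : Finset (Finset (Fin k))) =
      univ.map ⟨singleton, singleton_injective⟩ := by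
    rw [← powersetCard_one, powersetCard_eq_filter, powerset_univ]
  have h₀ : ({T ∈ {T | ¬#T = 1} | #T = 0} : Finset (Finset (Fin k))) = {∅} := by
    ext T; simp +contextual [card_eq_zero]
  rw [h₁, h₀, sum_map, sum_singleton, card_empty, Nat.sub_zero]
  simp only [Function.Embedding.coeFn_mk]
  ring

end Polynomial

theorem Finsupp.prod_ite_mem_pow {σ R : Type*} [CommMonoidWithZero R] [DecidableEq σ]
    (m : σ →₀ ℕ) (T : Finset σ) :
    ∏ i ∈ m.support, (if i ∈ T then (1 : R) else 0) ^ m i = if m.support ⊆ T then 1 else 0 := by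
  calc ∏ i ∈ m.support, (if i ∈ T then (1 : R) else 0) ^ m i
      = ∏ i ∈ m.support, (if i ∈ T then (1 : R) else 0) :=
        Finset.prod_congr rfl fun i hi => by split_ifs <;> simp [mem_support_iff.mp hi]
    _ = _ := by simp only [prod_boole, subset_iff]

namespace MvPolynomial

theorem totalDegree_bind₁_le {σ τ R : Type*} [CommSemiring R] {g : σ → MvPolynomial τ R}
    (hg : ∀ i, (g i).totalDegree ≤ 1) (p : MvPolynomial σ R) :
    (bind₁ g p).totalDegree ≤ p.totalDegree := by
  conv_lhs => rw [p.as_sum]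
  rw [map_sum]
  refine totalDegree_finsetSum_le fun m hm => ?_
  rw [bind₁_monomial]
  calc (C (coeff m p) * ∏ i ∈ m.support, g i ^ m i).totalDegree
      ≤ ∑ i ∈ m.support, (g i ^ m i).totalDegree := by
        refine (totalDegree_mul _ _).trans ?_
        rw [totalDegree_C, zero_add]
        exact totalDegree_finsetProd _ _
    _ ≤ ∑ i ∈ m.support, m i := sum_le_sum fun i _ =>
        (totalDegree_pow _ _).trans (by simpa using Nat.mul_le_mul_left _ (hg i))
    _ ≤ p.totalDegree := le_totalDegree hm

theorem subsetMean_eval_indicator {k : ℕ} (q : MvPolynomial (Fin k) ℝ) :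
    Polynomial.subsetMean (fun T => eval (fun j => if j ∈ T then 1 else 0) q) =
      ∑ m ∈ q.support, Polynomial.C (coeff m q) * Polynomial.X ^ #m.support := by
  simp only [Polynomial.subsetMean, eval_eq, Finsupp.prod_ite_mem_pow, mul_ite, mul_one, mul_zero,
    map_sum, sum_mul]
  rw [sum_comm]
  refine sum_congr rfl fun m _ => ?_
  rw [← Polynomial.sum_superset_pow_mul_one_sub_pow, mul_sum, sum_filter]
  refine sum_congr rfl fun T _ => ?_
  split_ifs <;> simp [mul_assoc]

theorem natDegree_subsetMean_eval_indicator_le {k : ℕ} (q : MvPolynomial (Fin k) ℝ) :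
    (Polynomial.subsetMean (fun T => eval (fun j => if j ∈ T then 1 else 0) q)).natDegree ≤
      q.totalDegree := by
  rw [subsetMean_eval_indicator]
  refine Polynomial.natDegree_sum_le_of_forall_le _ _ fun m hm => ?_
  have hcard : #m.support ≤ m.degree := by
    rw [card_eq_sum_ones, Finsupp.degree_apply]
    exact sum_le_sum fun i hi => Nat.one_le_iff_ne_zero.mpr (Finsupp.mem_support_iff.mp hi)
  exact (Polynomial.natDegree_C_mul_X_pow_le _ _).trans (hcard.trans (le_totalDegree hm))

end MvPolynomial

open MvPolynomial

/-- Coordinate `i` of `x` with the blocks `B j`, `j ∈ T`, flipped, as an affine function of the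
indicator of `T`; for disjoint blocks the sum has at most one nonzero term. -/
noncomputable def blockSubst {n k : ℕ} (x : Fin n → Bool) (B : Fin k → Finset (Fin n))
    (i : Fin n) : MvPolynomial (Fin k) ℝ :=
  C (bval (x i)) + C (1 - 2 * bval (x i)) * ∑ j with i ∈ B j, X j

theorem totalDegree_blockSubst_le {n k : ℕ} (x : Fin n → Bool) (B : Fin k → Finset (Fin n))
    (i : Fin n) : (blockSubst x B i).totalDegree ≤ 1 := by
  refine (totalDegree_add _ _).trans (max_le (by simp) ?_)
  refine (totalDegree_mul _ _).trans ?_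
  rw [totalDegree_C, zero_add]
  exact totalDegree_finsetSum_le fun j _ => (totalDegree_X _).le

theorem eval_blockSubst {n k : ℕ} (x : Fin n → Bool) {B : Fin k → Finset (Fin n)}
    (hB : Pairwise fun i j => Disjoint (B i) (B j)) (T : Finset (Fin k)) (i : Fin n) :
    eval (fun j => if j ∈ T then 1 else 0) (blockSubst x B i) =
      bval (flipSet x (T.biUnion B) i) := by
  have hsum : ∑ j with i ∈ B j, (if j ∈ T then (1 : ℝ) else 0) =
      if i ∈ T.biUnion B then 1 else 0 := by
    split_ifs with hi
    · obtain ⟨j₀, hj₀T, hij₀⟩ := mem_biUnion.mp hi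
      rw [sum_eq_single_of_mem j₀ (by simpa using hij₀), if_pos hj₀T]
      intro j hj hne
      exact absurd hij₀ (disjoint_left.mp (hB hne) (mem_filter.mp hj).2)
    · exact sum_eq_zero fun j hj =>
        if_neg fun hjT => hi (mem_biUnion.mpr ⟨j, hjT, (mem_filter.mp hj).2⟩)
  simp only [blockSubst, map_add, map_mul, eval_C, map_sum, eval_X, hsum, flipSet]
  split_ifs <;> cases x i <;> norm_num [bval]

theorem eval_bind₁_blockSubst {n k : ℕ} (x : Fin n → Bool) {B : Fin k → Finset (Fin n)}
    (hB : Pairwise fun i j => Disjoint (B i) (B j)) (T : Finset (Fin k))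
    (p : MvPolynomial (Fin n) ℝ) :
    eval (fun j => if j ∈ T then 1 else 0) (bind₁ (blockSubst x B) p) =
      evalB (flipSet x (T.biUnion B)) p := by
  change eval₂Hom (RingHom.id ℝ) _ (bind₁ _ p) = _
  rw [eval₂Hom_bind₁]
  change eval (fun i => eval _ (blockSubst x B i)) p = _
  simp only [eval_blockSubst x hB]
  rfl

theorem card_le_two_mul_totalDegree_sq {n k : ℕ} {p : MvPolynomial (Fin n) ℝ} {x : Fin n → Bool}
    (hmax : ∀ y, |evalB y p| ≤ |evalB x p|) (hx : evalB x p ≠ 0) {B : Fin k → Finset (Fin n)}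
    (hB : Pairwise fun i j => Disjoint (B i) (B j)) (hzero : ∀ j, evalB (flipSet x (B j)) p = 0) :
    k ≤ 2 * p.totalDegree ^ 2 := by
  set F : Finset (Fin k) → ℝ :=
    fun T => eval (fun j => if j ∈ T then 1 else 0) (bind₁ (blockSubst x B) p)
  have hF : ∀ T, F T = evalB (flipSet x (T.biUnion B)) p := fun T => eval_bind₁_blockSubst x hB T p
  have hF₀ : F ∅ = evalB x p := by rw [hF, biUnion_empty]; rfl
  have hF₁ : ∀ j, F {j} = 0 := fun j => by rw [hF, singleton_biUnion, hzero]
  have hpos : 0 < |F ∅| := by rw [hF₀]; exact abs_pos.mpr hx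
  have hdeg : (Polynomial.subsetMean F).natDegree ≤ p.totalDegree :=
    (natDegree_subsetMean_eval_indicator_le _).trans
      (totalDegree_bind₁_le (totalDegree_blockSubst_le x B) p)
  have hbound : ∀ t ∈ Set.Icc (0 : ℝ) 1, |(Polynomial.subsetMean F).eval t| ≤ |F ∅| :=
    fun t ht => Polynomial.abs_eval_subsetMean_le (fun T => by rw [hF, hF₀]; exact hmax _) ht
  have hmarkov := Polynomial.abs_derivative_eval_zero_le hpos hdeg hbound
  rw [Polynomial.derivative_subsetMean_eval_zero, sum_eq_zero fun j _ => hF₁ j, zero_sub,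
    abs_neg, abs_mul, Nat.abs_cast] at hmarkov
  exact_mod_cast le_of_mul_le_mul_right hmarkov hpos

noncomputable def pointIndicator {n : ℕ} (y : Fin n → Bool) : MvPolynomial (Fin n) ℝ :=
  ∏ i, if y i then X i else 1 - X i

theorem evalB_pointIndicator {n : ℕ} (x y : Fin n → Bool) :
    evalB x (pointIndicator y) = if x = y then 1 else 0 := by
  rw [evalB, pointIndicator, map_prod]
  trans ∏ i, if x i = y i then (1 : ℝ) else 0
  · refine prod_congr rfl fun i _ => ?_
    cases hx : x i <;> cases y i <;> simp [hx]
  · simp [prod_boole, _root_.funext_iff]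

theorem degreeOf_pointIndicator_le {n : ℕ} (y : Fin n → Bool) (i : Fin n) :
    degreeOf i (pointIndicator y) ≤ 1 := by
  have hfactor : ∀ j, degreeOf i (if y j then X j else 1 - X j : MvPolynomial (Fin n) ℝ) ≤
      if i = j then 1 else 0 := by
    intro j
    have hX : degreeOf i (X j : MvPolynomial (Fin n) ℝ) = if i = j then 1 else 0 :=
      degreeOf_X i j
    cases y j
    · simpa [hX] using degreeOf_sub_le i (1 : MvPolynomial (Fin n) ℝ) (X j)
    · simp [hX]
  calc degreeOf i (pointIndicator y) ≤ ∑ j, if i = j then 1 else 0 :=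
        (degreeOf_prod_le _ _ _).trans (sum_le_sum fun j _ => hfactor j)
    _ = 1 := by simp

theorem exists_multilinear_representation {n : ℕ} (g : (Fin n → Bool) → Bool) :
    ∃ p : MvPolynomial (Fin n) ℝ, Multilinear p ∧ ∀ x, evalB x p ≠ 0 ↔ g x = true := by
  refine ⟨∑ y with g y, pointIndicator y, fun i => ?_, fun x => ?_⟩
  · exact (degreeOf_sum_le _ _ _).trans (Finset.sup_le fun y _ => degreeOf_pointIndicator_le y i)
  · simp only [evalB, map_sum]
    simp only [← evalB.eq_1, evalB_pointIndicator, sum_ite_eq, mem_filter, mem_univ, true_and]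
    split_ifs <;> simp_all

theorem exists_totalDegree_eq_ndeg {n : ℕ} (g : (Fin n → Bool) → Bool) :
    ∃ p : MvPolynomial (Fin n) ℝ, Multilinear p ∧ (∀ x, evalB x p ≠ 0 ↔ g x = true) ∧
      p.totalDegree = ndeg g := by
  obtain ⟨p, hp⟩ := exists_multilinear_representation g
  have hne : ∃ d, ∃ p : MvPolynomial (Fin n) ℝ, Multilinear p ∧
      (∀ x, evalB x p ≠ 0 ↔ g x = true) ∧ p.totalDegree = d := ⟨_, p, hp.1, hp.2, rfl⟩
  exact Nat.sInf_mem hne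

/-- For every nonconstant Boolean function f, there exists x ∈ f⁻¹(0) with
bs_x(f) ≤ 2·ndeg(¬f)^2. -/
theorem stmt_6 (n : ℕ) (f : (Fin n → Bool) → Bool)
    (hf : ∃ x y : Fin n → Bool, f x ≠ f y) :
    ∃ x : Fin n → Bool, f x = false ∧ bs f x ≤ 2 * ndeg (fun x => !(f x)) ^ 2 := by
  obtain ⟨p, -, hp, hdeg⟩ := exists_totalDegree_eq_ndeg fun x => !(f x)
  obtain ⟨z, hz⟩ : ∃ z, f z = false := by
    obtain ⟨a, b, hab⟩ := hf
    cases ha : f a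
    · exact ⟨a, ha⟩
    · exact ⟨b, by simpa [ha] using hab.symm⟩
  obtain ⟨x, hmax⟩ := Finite.exists_max fun y => |evalB y p|
  have hpx : evalB x p ≠ 0 := fun h => by
    have := hmax z
    rw [h, abs_zero, abs_nonpos_iff] at this
    exact (hp z).mpr (by simp [hz]) this
  have hfx : f x = false := by simpa using (hp x).mp hpx
  refine ⟨x, hfx, csSup_le' ?_⟩
  rintro k ⟨B, hsens, hdisj⟩
  rw [← hdeg]
  refine card_le_two_mul_totalDegree_sq hmax hpx (fun i j => hdisj i j) fun j => ?_
  have hflip : f (flipSet x (B j)) = true := by simpa [hfx] using hsens j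
  by_contra h
  simpa [hflip] using (hp _).mp h
end

section
/- Let f: {0,1}^n → {0,1} be a nonconstant Boolean function and let p be a nondeterministic representation of f. Then for every x ∈ f^{-1}(0), p has a hitting set H with |H| ≤ deg(p)·bs_x(f); in particular, p has a hitting set of size at most deg(p)·min_{x ∈ f^{-1}(0)} bs_x(f). -/
/-!
If a maxonomial `M` of `p` avoids a set of coordinates, fixing those coordinates to their values
in `x` leaves a multilinear polynomial in which the top monomial `M` survives. A nonzero
multilinear polynomial is nonzero at some Boolean point (the indicator of a monomial of minimal
support), so some `y ∈ f⁻¹(1)` differs from `x` only inside `M`: every maxonomial contains a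
sensitive block at `x`. Now take a maximal family of disjoint sensitive blocks at `x`, each inside
a maxonomial. Its union has at most `deg(p) · bs_x(f)` elements and meets every maxonomial, since
a maxonomial missing it would contain one more block.
-/

open MvPolynomial

/-- `M` is a maxonomial of `p`: a monomial of maximal (total) degree with nonzero coefficient. -/
def IsMaxonomial {n : ℕ} (p : MvPolynomial (Fin n) ℝ) (M : Finset (Fin n)) : Prop :=
  M.card = p.totalDegree ∧ MvPolynomial.coeff (∑ i ∈ M, Finsupp.single i 1) p ≠ 0

/-- `H` is a hitting set of `p`: it intersects every maxonomial of `p`. -/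
def IsHittingSet {n : ℕ} (p : MvPolynomial (Fin n) ℝ) (H : Finset (Fin n)) : Prop :=
  ∀ M, IsMaxonomial p M → (H ∩ M).Nonempty

open Finset

section Multilinear

variable {σ : Type*} {p : MvPolynomial σ ℝ}

theorem Multilinear.le_one (hp : Multilinear p) {d : σ →₀ ℕ} (hd : d ∈ p.support) (i : σ) :
    d i ≤ 1 :=
  (monomial_le_degreeOf i hd).trans (hp i)

theorem Multilinear.eq_of_support_eq (hp : Multilinear p) {d e : σ →₀ ℕ} (hd : d ∈ p.support)
    (he : e ∈ p.support) (h : d.support = e.support) : d = e := by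
  ext i
  have hzero : d i = 0 ↔ e i = 0 := by
    simpa only [Finsupp.mem_support_iff, not_not] using (iff_of_eq (congrArg (i ∈ ·) h)).not
  have := hp.le_one hd i
  have := hp.le_one he i
  omega

theorem evalB_eq_sum_coeff (x : σ → Bool) (p : MvPolynomial σ ℝ) :
    evalB x p = ∑ d ∈ p.support with ∀ i ∈ d.support, x i = true, coeff d p := by
  rw [evalB, eval_eq, sum_filter]
  refine sum_congr rfl fun d _ => ?_
  split_ifs with h
  · rw [prod_eq_one fun i hi => by rw [if_pos (h i hi), one_pow], mul_one]
  · obtain ⟨i, hi, hxi⟩ := not_forall₂.mp h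
    rw [prod_eq_zero hi (by rw [if_neg hxi, zero_pow (Finsupp.mem_support_iff.mp hi)]), mul_zero]

theorem Multilinear.exists_evalB_ne_zero (hp : Multilinear p) (hp0 : p ≠ 0) :
    ∃ x, evalB x p ≠ 0 := by
  classical
  obtain ⟨m, hm, hmin⟩ :=
    p.support.exists_min_image (fun d => d.support.card) (support_nonempty.mpr hp0)
  refine ⟨fun i => decide (i ∈ m.support), ?_⟩
  have hsupp : {d ∈ p.support | ∀ i ∈ d.support, decide (i ∈ m.support) = true} = {m} := by
    ext d
    simp only [mem_filter, decide_eq_true_eq, mem_singleton]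
    refine ⟨fun ⟨hd, hdm⟩ => hp.eq_of_support_eq hd hm (eq_of_subset_of_card_le hdm (hmin d hd)),
      ?_⟩
    rintro rfl
    exact ⟨hm, fun _ => id⟩
  rw [evalB_eq_sum_coeff, hsupp, sum_singleton]
  exact mem_support_iff.mp hm

end Multilinear

section PartialEval

variable {σ R : Type*} [DecidableEq σ] [CommSemiring R]

/-- `partialEval M a p` substitutes `a i` for `X i` for every `i ∉ M`. -/
noncomputable def partialEval (M : Finset σ) (a : σ → R) (p : MvPolynomial σ R) :
    MvPolynomial σ R :=
  ∑ d ∈ p.support,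
    monomial (d.filter (· ∈ M)) (coeff d p * (d.filter (· ∉ M)).prod fun i k => a i ^ k)

theorem coeff_partialEval (M : Finset σ) (a : σ → R) (p : MvPolynomial σ R) (e : σ →₀ ℕ) :
    coeff e (partialEval M a p) = ∑ d ∈ p.support with d.filter (· ∈ M) = e,
      coeff d p * (d.filter (· ∉ M)).prod fun i k => a i ^ k := by
  rw [partialEval, coeff_sum, sum_filter]
  exact sum_congr rfl fun d _ => coeff_monomial _ _ _

theorem eval_partialEval (M : Finset σ) (a v : σ → R) (p : MvPolynomial σ R) :
    eval v (partialEval M a p) = eval (fun i => if i ∈ M then v i else a i) p := by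
  rw [partialEval, map_sum, eval_eq]
  refine sum_congr rfl fun d _ => ?_
  change _ = coeff d p * d.prod fun i k => (if i ∈ M then v i else a i) ^ k
  rw [eval_monomial, mul_assoc, mul_comm (Finsupp.prod _ _),
    ← Finsupp.prod_filter_mul_prod_filter_not (· ∈ M) d]
  congr 2 <;> refine Finsupp.prod_congr fun i hi => ?_ <;>
    simp_all only [Finsupp.support_filter, mem_filter, if_true, if_false]

theorem Multilinear.partialEval {p : MvPolynomial σ ℝ} (hp : Multilinear p) (M : Finset σ)
    (a : σ → ℝ) : Multilinear (partialEval M a p) := by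
  refine fun i => degreeOf_le_iff.mpr fun e he => ?_
  rw [mem_support_iff, coeff_partialEval] at he
  obtain ⟨d, hd, -⟩ := exists_ne_zero_of_sum_ne_zero he
  obtain ⟨hdp, rfl⟩ := mem_filter.mp hd
  rw [Finsupp.filter_apply]
  split_ifs
  · exact hp.le_one hdp i
  · exact zero_le_one

end PartialEval

section Maxonomial

variable {n : ℕ} {p : MvPolynomial (Fin n) ℝ} {M : Finset (Fin n)}

theorem sum_single_one_apply {α : Type*} [DecidableEq α] (M : Finset α) (i : α) :
    (∑ j ∈ M, Finsupp.single j 1 : α →₀ ℕ) i = if i ∈ M then 1 else 0 := by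
  simp [Finsupp.finsetSum_apply, Finsupp.single_apply]

theorem IsMaxonomial.eq_of_filter_eq (hM : IsMaxonomial p M) {d : Fin n →₀ ℕ}
    (hd : d ∈ p.support) (h : d.filter (· ∈ M) = ∑ i ∈ M, Finsupp.single i 1) :
    d = ∑ i ∈ M, Finsupp.single i 1 := by
  have hsplit := Finsupp.filter_add_filter_not d (· ∈ M)
  have hdeg : d.degree ≤ p.totalDegree := le_totalDegree hd
  rw [← hsplit, map_add, h, map_sum] at hdeg
  simp only [Finsupp.degree_single, sum_const, smul_eq_mul, mul_one, hM.1] at hdeg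
  rw [← hsplit, h, (Finsupp.degree_eq_zero_iff (d.filter (· ∉ M))).mp (by omega), add_zero]

theorem IsMaxonomial.coeff_partialEval (hM : IsMaxonomial p M) (a : Fin n → ℝ) :
    coeff (∑ i ∈ M, Finsupp.single i 1) (partialEval M a p) =
      coeff (∑ i ∈ M, Finsupp.single i 1) p := by
  set e : Fin n →₀ ℕ := ∑ i ∈ M, Finsupp.single i 1
  have he_pos : e.filter (· ∈ M) = e := (Finsupp.filter_eq_self_iff _ _).mpr fun i hi => by
    by_contra hiM
    simp [e, sum_single_one_apply, hiM] at hi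
  have he_neg : e.filter (· ∉ M) = 0 := (Finsupp.filter_eq_zero_iff _ _).mpr fun i hiM => by
    simp [e, sum_single_one_apply, hiM]
  have hfiber : {d ∈ p.support | d.filter (· ∈ M) = e} = {e} := by
    ext d
    simp only [mem_filter, mem_singleton]
    refine ⟨fun ⟨hd, h⟩ => hM.eq_of_filter_eq hd h, ?_⟩
    rintro rfl
    exact ⟨mem_support_iff.mpr hM.2, he_pos⟩
  rw [_root_.coeff_partialEval, hfiber, sum_singleton, he_neg, Finsupp.prod_zero_index, mul_one]

theorem exists_evalB_ne_zero_of_isMaxonomial (hp : Multilinear p)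
    (hM : IsMaxonomial p M) (x : Fin n → Bool) :
    ∃ y, (∀ i ∉ M, y i = x i) ∧ evalB y p ≠ 0 := by
  have hq : partialEval M (bval ∘ x) p ≠ 0 := fun h0 =>
    hM.2 (by rw [← hM.coeff_partialEval, h0, coeff_zero])
  obtain ⟨z, hz⟩ := (hp.partialEval M _).exists_evalB_ne_zero hq
  refine ⟨fun i => if i ∈ M then z i else x i, fun i hi => if_neg hi, ?_⟩
  rw [evalB, eval_partialEval] at hz
  unfold evalB
  convert hz using 3
  funext i
  by_cases hi : i ∈ M <;> simp only [hi, if_true, if_false, Function.comp_apply, bval]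

end Maxonomial

section BlockSensitivity

variable {n : ℕ} {f : (Fin n → Bool) → Bool} {x : Fin n → Bool}

def IsDisjointSensitiveBlocks (f : (Fin n → Bool) → Bool) (x : Fin n → Bool)
    (𝓑 : Finset (Finset (Fin n))) : Prop :=
  (∀ B ∈ 𝓑, f (flipSet x B) ≠ f x) ∧ (𝓑 : Set (Finset (Fin n))).PairwiseDisjoint id

theorem flipSet_empty (x : Fin n → Bool) : flipSet x ∅ = x := by
  funext i
  simp [flipSet]

theorem flipSet_filter_ne (x y : Fin n → Bool) : flipSet x {i | y i ≠ x i} = y := by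
  funext i
  simp only [flipSet, mem_filter, mem_univ, true_and]
  cases x i <;> cases y i <;> rfl

theorem nonempty_of_flipSet_ne {B : Finset (Fin n)} (hB : f (flipSet x B) ≠ f x) :
    B.Nonempty :=
  nonempty_iff_ne_empty.mpr fun h => hB (by rw [h, flipSet_empty])

theorem bddAbove_bs (f : (Fin n → Bool) → Bool) (x : Fin n → Bool) :
    BddAbove {k | ∃ Bs : Fin k → Finset (Fin n),
      (∀ i, f (flipSet x (Bs i)) ≠ f x) ∧ (∀ i j, i ≠ j → Disjoint (Bs i) (Bs j))} := by
  refine ⟨n, fun k ⟨Bs, hsens, hdisj⟩ => ?_⟩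
  choose c hc using fun i => nonempty_of_flipSet_ne (hsens i)
  have hc_inj : Function.Injective c := fun i j hij => by
    by_contra hne
    exact disjoint_left.mp (hdisj i j hne) (hc i) (hij ▸ hc j)
  simpa using Fintype.card_le_of_injective c hc_inj

theorem IsDisjointSensitiveBlocks.card_le_bs {𝓑 : Finset (Finset (Fin n))}
    (h𝓑 : IsDisjointSensitiveBlocks f x 𝓑) : 𝓑.card ≤ bs f x :=
  le_csSup (bddAbove_bs f x) ⟨fun i => 𝓑.equivFin.symm i, fun i => h𝓑.1 _ (coe_mem _),
    fun i j hij => h𝓑.2 (coe_mem _) (coe_mem _) (by simpa [Subtype.ext_iff] using hij)⟩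

theorem IsDisjointSensitiveBlocks.insert {𝓑 : Finset (Finset (Fin n))} {B : Finset (Fin n)}
    (h𝓑 : IsDisjointSensitiveBlocks f x 𝓑) (hB : f (flipSet x B) ≠ f x)
    (hdisj : ∀ C ∈ 𝓑, Disjoint B C) : IsDisjointSensitiveBlocks f x (insert B 𝓑) := by
  refine ⟨forall_mem_insert _ _ _ |>.mpr ⟨hB, h𝓑.1⟩, ?_⟩
  rw [coe_insert]
  exact h𝓑.2.insert fun C hC _ => hdisj C hC

end BlockSensitivity

section HittingSet

variable {n : ℕ} {f : (Fin n → Bool) → Bool} {p : MvPolynomial (Fin n) ℝ} {x : Fin n → Bool}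

theorem exists_sensitive_block_subset_of_isMaxonomial (hp : Multilinear p)
    (hrep : ∀ y, evalB y p ≠ 0 → f y = true) (hx : f x = false) {M : Finset (Fin n)}
    (hM : IsMaxonomial p M) : ∃ B ⊆ M, f (flipSet x B) ≠ f x := by
  obtain ⟨y, hyx, hy⟩ := exists_evalB_ne_zero_of_isMaxonomial hp hM x
  refine ⟨({i | y i ≠ x i} : Finset (Fin n)), fun i hi => ?_, ?_⟩
  · by_contra hiM
    exact (mem_filter.mp hi).2 (hyx i hiM)
  · rw [flipSet_filter_ne, hrep y hy, hx]
    decide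

theorem exists_isHittingSet_card_le_totalDegree_mul_bs (hp : Multilinear p)
    (hrep : ∀ y, evalB y p ≠ 0 → f y = true) (hx : f x = false) :
    ∃ H, IsHittingSet p H ∧ H.card ≤ p.totalDegree * bs f x := by
  classical
  let 𝓕 : Finset (Finset (Finset (Fin n))) := {𝓑 | IsDisjointSensitiveBlocks f x 𝓑 ∧
    ∀ B ∈ 𝓑, ∃ M, IsMaxonomial p M ∧ B ⊆ M}
  obtain ⟨𝓑, h𝓑, hmax⟩ := 𝓕.exists_max_image card
    ⟨∅, mem_filter.mpr ⟨mem_univ _, by simp [IsDisjointSensitiveBlocks]⟩⟩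
  obtain ⟨hblocks, hinside⟩ := (mem_filter.mp h𝓑).2
  refine ⟨𝓑.biUnion id, fun M hM => ?_, ?_⟩
  · by_contra hmiss
    obtain ⟨B, hBM, hB⟩ := exists_sensitive_block_subset_of_isMaxonomial hp hrep hx hM
    have hdisj : ∀ C ∈ 𝓑, Disjoint B C := fun C hC =>
      (disjoint_iff_inter_eq_empty.mpr (not_nonempty_iff_eq_empty.mp hmiss)).symm.mono
        hBM (subset_biUnion_of_mem id hC)
    have hB𝓑 : B ∉ 𝓑 := fun hB𝓑 =>
      (nonempty_of_flipSet_ne hB).ne_empty (disjoint_self.mp (hdisj B hB𝓑))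
    have := hmax (insert B 𝓑) (mem_filter.mpr ⟨mem_univ _, hblocks.insert hB hdisj,
      forall_mem_insert _ _ _ |>.mpr ⟨⟨M, hM, hBM⟩, hinside⟩⟩)
    rw [card_insert_of_notMem hB𝓑] at this
    omega
  · calc (𝓑.biUnion id).card ≤ ∑ B ∈ 𝓑, B.card := card_biUnion_le
      _ ≤ ∑ _B ∈ 𝓑, p.totalDegree := sum_le_sum fun B hB => by
          obtain ⟨M, hM, hBM⟩ := hinside B hB
          exact (card_le_card hBM).trans hM.1.le
      _ = p.totalDegree * 𝓑.card := by rw [sum_const, smul_eq_mul, mul_comm]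
      _ ≤ p.totalDegree * bs f x := Nat.mul_le_mul_left _ hblocks.card_le_bs

end HittingSet

/-- Let f be a nonconstant Boolean function and p a nondeterministic representation of f.
Then for every x ∈ f⁻¹(0), p has a hitting set H with |H| ≤ deg(p)·bs_x(f); in particular,
p has a hitting set of size at most deg(p)·min_{x ∈ f⁻¹(0)} bs_x(f). -/
theorem stmt_7 (n : ℕ) (f : (Fin n → Bool) → Bool)
    (hf : ∃ x y : Fin n → Bool, f x ≠ f y)
    (p : MvPolynomial (Fin n) ℝ) (hml : Multilinear p)
    (hrep : ∀ x, evalB x p ≠ 0 ↔ f x = true) :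
    (∀ x : Fin n → Bool, f x = false →
      ∃ H : Finset (Fin n), IsHittingSet p H ∧ H.card ≤ p.totalDegree * bs f x) ∧
    (∃ H : Finset (Fin n), IsHittingSet p H ∧
      H.card ≤ p.totalDegree * sInf {k | ∃ x : Fin n → Bool, f x = false ∧ bs f x = k}) := by
  have hzero (x) (hx : f x = false) :=
    exists_isHittingSet_card_le_totalDegree_mul_bs hml (fun y => (hrep y).mp) hx
  refine ⟨hzero, ?_⟩
  obtain ⟨x, hx⟩ : ∃ x, f x = false := by
    obtain ⟨a, b, hab⟩ := hf
    cases ha : f a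
    · exact ⟨a, ha⟩
    · exact ⟨b, by simpa [ha] using hab.symm⟩
  obtain ⟨x₀, hx₀, hbs⟩ :=
    Nat.sInf_mem (s := {k | ∃ x, f x = false ∧ bs f x = k}) ⟨_, x, hx, rfl⟩
  rw [← hbs]
  exact hzero x₀ hx₀
end

section
/- For every real polynomial p in n variables, there exists a univariate real polynomial P with deg(P) ≤ deg(p) such that for all i ∈ {0,1,...,n}, binom(n,i)·P(i) = Σ_{x∈{0,1}^n, |x|=i} p(x). -/
open MvPolynomial

/-- The Hamming weight of a Boolean string. -/
def wt {n : ℕ} (x : Fin n → Bool) : ℕ := (Finset.univ.filter fun i => x i = true).card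

/-!
Identify `x ∈ {0,1}^n` with the set `T` of its true coordinates. The monomial with exponent `m`
is `1` at `T` if `m.support ⊆ T` and `0` otherwise, so summing `p` over the `i`-subsets `T`
gives `∑ₘ (coeff m p) · #{T : |T| = i, m.support ⊆ T}`. With `s = |m.support|`, double
counting pairs `S ⊆ T` gives `#{T : |T| = i, S ⊆ T} · C(n,s) = C(n,i) · C(i,s)`, and
`i ↦ C(i,s)` is a polynomial of degree `s ≤ deg m`. Hence `P = ∑ₘ (coeff m p / C(n,s)) · C(X,s)`.
-/

open Finset

noncomputable def choosePoly (K : Type*) [Field K] (k : ℕ) : Polynomial K :=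
  Polynomial.C (k.factorial : K)⁻¹ * descPochhammer K k

theorem choosePoly_eval_natCast {K : Type*} [Field K] [CharZero K] (k i : ℕ) :
    (choosePoly K k).eval (i : K) = i.choose k := by
  rw [choosePoly, Polynomial.eval_mul, Polynomial.eval_C, Nat.cast_choose_eq_descPochhammer_div,
    inv_mul_eq_div]

theorem natDegree_choosePoly_le (K : Type*) [Field K] (k : ℕ) :
    (choosePoly K k).natDegree ≤ k :=
  (Polynomial.natDegree_C_mul_le _ _).trans (descPochhammer_natDegree K k).le

theorem MvPolynomial.card_support_le_totalDegree {σ R : Type*} [CommSemiring R]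
    {p : MvPolynomial σ R} {m : σ →₀ ℕ} (hm : m ∈ p.support) :
    #m.support ≤ p.totalDegree := by
  classical
  calc #m.support = #(Finsupp.toMultiset m).toFinset := by rw [Finsupp.toFinset_toMultiset]
    _ ≤ Multiset.card (Finsupp.toMultiset m) := Multiset.toFinset_card_le _
    _ = m.sum fun _ e => e := Finsupp.card_toMultiset m
    _ ≤ p.totalDegree := le_totalDegree hm

theorem MvPolynomial.eval_indicator {σ R : Type*} [CommSemiring R] [DecidableEq σ]
    (T : Finset σ) (p : MvPolynomial σ R) :
    eval (fun j => if j ∈ T then 1 else 0) p = ∑ m ∈ p.support with m.support ⊆ T, coeff m p := by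
  rw [eval_eq, sum_filter]
  refine sum_congr rfl fun m _ => ?_
  split_ifs with hmT
  · rw [prod_eq_one fun j hj => by rw [if_pos (hmT hj), one_pow], mul_one]
  · obtain ⟨j, hjm, hjT⟩ := not_subset.mp hmT
    rw [prod_eq_zero hjm (by rw [if_neg hjT, zero_pow (Finsupp.mem_support_iff.mp hjm)]),
      mul_zero]

theorem card_filter_powersetCard_subset_mul_choose {α : Type*} [Fintype α] [DecidableEq α]
    (S : Finset α) (i : ℕ) :
    #{T ∈ powersetCard i univ | S ⊆ T} * (Fintype.card α).choose #S
      = (Fintype.card α).choose i * i.choose #S := by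
  by_cases hSi : #S ≤ i
  · rw [card_filter_powersetCard_subset S univ i (subset_univ S) hSi, card_univ, mul_comm,
      Nat.choose_mul hSi]
  · rw [not_le] at hSi
    rw [Nat.choose_eq_zero_of_lt hSi, mul_zero, mul_eq_zero, card_eq_zero, filter_eq_empty_iff]
    exact Or.inl fun T hT hST =>
      hSi.not_ge ((card_le_card hST).trans (mem_powersetCard.mp hT).2.le)

theorem sum_wt_eq_sum_powersetCard {n : ℕ} {M : Type*} [AddCommMonoid M]
    (f : Finset (Fin n) → M) (i : ℕ) :
    ∑ x ∈ univ.filter (fun x : Fin n → Bool => wt x = i), f (univ.filter fun j => x j = true)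
      = ∑ T ∈ powersetCard i univ, f T := by
  refine sum_nbij' (fun x => univ.filter fun j => x j = true) (fun T j => decide (j ∈ T))
    ?_ ?_ ?_ ?_ fun _ _ => rfl
  · intro x hx
    exact mem_powersetCard.mpr ⟨subset_univ _, (mem_filter.mp hx).2⟩
  · intro T hT
    refine mem_filter.mpr ⟨mem_univ _, ?_⟩
    simpa [wt] using (mem_powersetCard.mp hT).2
  · intro x _
    funext j
    simp
  · intro T _
    ext j
    simp

noncomputable def symmetrization {σ K : Type*} [Fintype σ] [Field K] (p : MvPolynomial σ K) :
    Polynomial K :=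
  ∑ m ∈ p.support,
    Polynomial.C (coeff m p / (Fintype.card σ).choose #m.support) * choosePoly K #m.support

theorem natDegree_symmetrization_le {σ K : Type*} [Fintype σ] [Field K]
    (p : MvPolynomial σ K) : (symmetrization p).natDegree ≤ p.totalDegree :=
  Polynomial.natDegree_sum_le_of_forall_le _ _ fun _ hm =>
    (Polynomial.natDegree_C_mul_le _ _).trans <|
      (natDegree_choosePoly_le K _).trans (card_support_le_totalDegree hm)

theorem choose_mul_eval_symmetrization {σ K : Type*} [Fintype σ] [DecidableEq σ] [Field K]
    [CharZero K] (p : MvPolynomial σ K) (i : ℕ) :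
    (Fintype.card σ).choose i * (symmetrization p).eval (i : K)
      = ∑ T ∈ powersetCard i univ, eval (fun j => if j ∈ T then 1 else 0) p := by
  simp_rw [eval_indicator, sum_filter]
  rw [sum_comm, symmetrization, Polynomial.eval_finsetSum, mul_sum]
  refine sum_congr rfl fun m _ => ?_
  rw [← sum_filter, sum_const, nsmul_eq_mul, Polynomial.eval_mul, Polynomial.eval_C,
    choosePoly_eval_natCast]
  have hchoose : ((Fintype.card σ).choose #m.support : K) ≠ 0 :=
    Nat.cast_ne_zero.mpr (Nat.choose_pos (card_le_univ _)).ne'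
  have hcount := card_filter_powersetCard_subset_mul_choose m.support i
  apply_fun (Nat.cast : ℕ → K) at hcount
  push_cast at hcount
  field_simp
  linear_combination (-coeff m p) * hcount

/-- Minsky–Papert symmetrization: for every real polynomial p in n variables there is a
univariate real polynomial P with deg(P) ≤ deg(p) such that for all 0 ≤ i ≤ n,
binom(n,i)·P(i) = Σ_{x ∈ {0,1}^n, |x| = i} p(x). -/
theorem stmt_11 (n : ℕ) (p : MvPolynomial (Fin n) ℝ) :
    ∃ P : Polynomial ℝ, P.natDegree ≤ p.totalDegree ∧
      ∀ i : ℕ, i ≤ n →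
        (n.choose i : ℝ) * P.eval (i : ℝ) =
          ∑ x ∈ Finset.univ.filter (fun x : Fin n → Bool => wt x = i), evalB x p := by
  refine ⟨symmetrization p, natDegree_symmetrization_le p, fun i _ => ?_⟩
  have hsymm := choose_mul_eval_symmetrization p i
  rw [Fintype.card_fin] at hsymm
  rw [hsymm, ← sum_wt_eq_sum_powersetCard]
  refine sum_congr rfl fun x _ => ?_
  simp [evalB]
end

section
/- Let p be a nonzero multilinear real polynomial in n variables. Then the number of points x ∈ {0,1}^n with p(x) ≠ 0 is at least 2^{n − deg(p)}; equivalently, for x chosen uniformly at random from {0,1}^n, Pr[p(x) ≠ 0] ≥ 2^{−deg(p)}. -/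
/-!
Split off the first variable: `p = x₀ * q + r` with `q`, `r` multilinear in the remaining `n`
variables, `deg q + 1 ≤ deg p` and `deg r ≤ deg p`. The two halves `x₀ = 0` and `x₀ = 1` of the
cube see the polynomials `r` and `r + q`. If both are nonzero, induction gives at least
`2 * 2 ^ (n - deg p)` nonzero points; if one of them vanishes, the other is `± q`, of degree
`< deg p`, and induction on it alone gives `2 ^ (n + 1 - deg p)`.
-/

open MvPolynomial

open Finset

theorem card_filter_fin_succ_pi {α : Type*} [Fintype α] [DecidableEq α] {n : ℕ}
    (P : (Fin (n + 1) → α) → Prop) [DecidablePred P] :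
    #{x | P x} = ∑ a : α, #{x : Fin n → α | P (Fin.cons a x)} := by
  simp only [card_filter]
  rw [← Fintype.sum_equiv (Fin.consEquiv fun _ => α) _ _ (fun _ => rfl), Fintype.sum_prod_type]
  rfl

noncomputable def cubeSupportCard {n : ℕ} (p : MvPolynomial (Fin n) ℝ) : ℕ :=
  #{x : Fin n → Bool | evalB x p ≠ 0}

namespace Multilinear

variable {n : ℕ} {p : MvPolynomial (Fin (n + 1)) ℝ}

theorem natDegree_finSuccEquiv_le_one (hp : Multilinear p) :
    (finSuccEquiv ℝ n p).natDegree ≤ 1 := by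
  rw [natDegree_finSuccEquiv]
  exact hp 0

theorem coeff_finSuccEquiv (hp : Multilinear p) (k : ℕ) :
    Multilinear ((finSuccEquiv ℝ n p).coeff k) := fun j =>
  (degreeOf_coeff_finSuccEquiv p j k).trans (hp j.succ)

theorem add_s12 {σ : Type*} {q r : MvPolynomial σ ℝ} (hq : Multilinear q) (hr : Multilinear r) :
    Multilinear (q + r) := fun i =>
  (degreeOf_add_le i q r).trans (max_le (hq i) (hr i))

theorem evalB_cons (hp : Multilinear p) (b : Bool) (x : Fin n → Bool) :
    evalB (Fin.cons b x) p =
      evalB x ((finSuccEquiv ℝ n p).coeff 0) + bval b * evalB x ((finSuccEquiv ℝ n p).coeff 1) := by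
  have hcons : (fun i => if (Fin.cons b x : Fin (n + 1) → Bool) i then (1 : ℝ) else 0) =
      Fin.cons (bval b) (fun i => if x i then (1 : ℝ) else 0) := by
    funext i
    refine Fin.cases ?_ (fun _ => ?_) i <;> simp [bval]
  rw [evalB, hcons, eval_eq_eval_mv_eval']
  conv_lhs => rw [Polynomial.eq_X_add_C_of_natDegree_le_one hp.natDegree_finSuccEquiv_le_one]
  simp only [Polynomial.map_add, Polynomial.map_mul, Polynomial.map_C, Polynomial.map_X,
    Polynomial.eval_add, Polynomial.eval_mul, Polynomial.eval_C, Polynomial.eval_X, evalB]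
  ring

theorem cubeSupportCard_eq_add (hp : Multilinear p) :
    cubeSupportCard p = cubeSupportCard ((finSuccEquiv ℝ n p).coeff 0) +
      cubeSupportCard ((finSuccEquiv ℝ n p).coeff 0 + (finSuccEquiv ℝ n p).coeff 1) := by
  simp only [cubeSupportCard, card_filter_fin_succ_pi, Fintype.sum_bool, hp.evalB_cons, bval]
  simp only [if_true, Bool.false_eq_true, if_false, one_mul, zero_mul, add_zero, evalB, map_add]
  rw [add_comm]
  -- the two sides differ only in their `Decidable` instances
  rfl

end Multilinear

theorem two_pow_le_cubeSupportCard_add {n d : ℕ}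
    (ih : ∀ s : MvPolynomial (Fin n) ℝ, Multilinear s → s ≠ 0 →
      2 ^ (n - s.totalDegree) ≤ cubeSupportCard s)
    {q r : MvPolynomial (Fin n) ℝ} (hq : Multilinear q) (hr : Multilinear r) (hqr : q ≠ 0 ∨ r ≠ 0)
    (hqd : q ≠ 0 → q.totalDegree + 1 ≤ d) (hrd : r ≠ 0 → r.totalDegree ≤ d) :
    2 ^ (n + 1 - d) ≤ cubeSupportCard r + cubeSupportCard (r + q) := by
  by_cases hr0 : r = 0
  · subst hr0
    have hq0 : q ≠ 0 := by simpa using hqr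
    calc 2 ^ (n + 1 - d) ≤ 2 ^ (n - q.totalDegree) :=
          Nat.pow_le_pow_right two_pos (by have := hqd hq0; omega)
      _ ≤ cubeSupportCard (0 + q) := by simpa using ih q hq hq0
      _ ≤ _ := Nat.le_add_left _ _
  by_cases hs0 : r + q = 0
  · have hrq : r = -q := eq_neg_of_add_eq_zero_left hs0
    have hq0 : q ≠ 0 := by rintro rfl; exact hr0 (by simpa using hrq)
    calc 2 ^ (n + 1 - d) ≤ 2 ^ (n - r.totalDegree) := by
          refine Nat.pow_le_pow_right two_pos ?_
          rw [hrq, totalDegree_neg]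
          have := hqd hq0
          omega
      _ ≤ cubeSupportCard r := ih r hr hr0
      _ ≤ _ := Nat.le_add_right _ _
  have hsd : (r + q).totalDegree ≤ d := by
    refine (totalDegree_add r q).trans (max_le (hrd hr0) ?_)
    by_cases hq0 : q = 0
    · simp [hq0]
    · have := hqd hq0; omega
  have hrd' := hrd hr0
  calc 2 ^ (n + 1 - d) ≤ 2 ^ (n - d) + 2 ^ (n - d) := by
        rw [← two_mul, ← pow_succ']
        exact Nat.pow_le_pow_right two_pos (by omega)
    _ ≤ 2 ^ (n - r.totalDegree) + 2 ^ (n - (r + q).totalDegree) :=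
        add_le_add (Nat.pow_le_pow_right two_pos (by omega))
          (Nat.pow_le_pow_right two_pos (by omega))
    _ ≤ cubeSupportCard r + cubeSupportCard (r + q) :=
        add_le_add (ih r hr hr0) (ih _ (hr.add_s12 hq) hs0)

theorem Multilinear.two_pow_sub_totalDegree_le_cubeSupportCard {n : ℕ}
    {p : MvPolynomial (Fin n) ℝ} (hp : Multilinear p) (hp0 : p ≠ 0) :
    2 ^ (n - p.totalDegree) ≤ cubeSupportCard p := by
  induction n with
  | zero =>
    rw [Nat.zero_sub, pow_zero]
    refine card_pos.mpr ⟨fun _ => false, mem_filter.mpr ⟨mem_univ _, ?_⟩⟩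
    rw [eq_C_of_isEmpty p] at hp0 ⊢
    simpa [evalB] using hp0
  | succ n ih =>
    have hslices : (finSuccEquiv ℝ n p).coeff 1 ≠ 0 ∨ (finSuccEquiv ℝ n p).coeff 0 ≠ 0 := by
      by_contra! h
      refine hp0 ((finSuccEquiv ℝ n).injective ?_)
      rw [map_zero, Polynomial.eq_X_add_C_of_natDegree_le_one hp.natDegree_finSuccEquiv_le_one,
        h.1, h.2]
      simp
    rw [hp.cubeSupportCard_eq_add]
    exact two_pow_le_cubeSupportCard_add (fun s hs hs0 => ih hs hs0) (hp.coeff_finSuccEquiv 1)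
      (hp.coeff_finSuccEquiv 0) hslices
      (fun hq => by simpa using totalDegree_coeff_finSuccEquiv_add_le p 1 hq)
      (fun hr => by simpa using totalDegree_coeff_finSuccEquiv_add_le p 0 hr)

open scoped Classical in
/-- Schwartz-type lemma: a nonzero multilinear real polynomial in n variables is nonzero on
at least 2^{n - deg(p)} points of the cube (so Pr[p(x) ≠ 0] ≥ 2^{-deg(p)}). -/
theorem stmt_12 (n : ℕ) (p : MvPolynomial (Fin n) ℝ) (hml : Multilinear p) (hp : p ≠ 0) :
    2 ^ (n - p.totalDegree) ≤
      (Finset.univ.filter (fun x : Fin n → Bool => evalB x p ≠ 0)).card :=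
  hml.two_pow_sub_totalDegree_le_cubeSupportCard hp
end

section
/- Let n ≥ 1 and consider the real polynomials in 2n variables g1 = X_1 + ⋯ + X_n and g2 = X_1 + ⋯ + X_n + Y_1 + ⋯ + Y_n − (n+1). Then deg(g1) = deg(g2) = 1, g1 and g2 have no common zeros on {0,1}^{2n}, and for any real polynomials h1, h2 in 2n variables satisfying h1(x,y)·g1(x,y) + h2(x,y)·g2(x,y) = 1 for all (x,y) ∈ {0,1}^n × {0,1}^n, one has max(deg(ml(h1·g1)), deg(ml(h2·g2))) ≥ n, where ml(r) denotes the unique multilinear real polynomial agreeing with r on {0,1}^{2n}. -/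
open MvPolynomial

/-! The bound only involves `m₁`, the multilinear form of `h₁ g₁`: it vanishes on the face
`x = 0`, where `g₁` does, and equals `1` on the slice `|x| + |y| = n + 1`, where `g₂` vanishes.
Averaging a monomial with `k` of the `x`-variables and `l` of the `y`-variables over the cube points
with `|x| = s`, `|y| = t` gives `C(s,k) C(t,l) / (C(n,k) C(n,l))`, so the average of `m₁` over
these points is a polynomial `P(s, t)` of total degree at most `deg m₁`. If `deg m₁ < n`, then
`P(0, ·)` vanishes at `t = 0, …, n`, so `P(0, n + 1) = 0`; but `P(s, n + 1 - s) = 1` for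
`s = 1, …, n`, so also `P(0, n + 1) = 1`. -/

open Finset Polynomial

noncomputable def binomialPoly (K : Type*) [Field K] (k : ℕ) : K[X] :=
  Polynomial.C ((k.factorial : K)⁻¹) * descPochhammer K k

section

variable {K : Type*} [Field K]

theorem binomialPoly_eval_natCast [CharZero K] (k t : ℕ) :
    (binomialPoly K k).eval (t : K) = t.choose k := by
  rw [binomialPoly, Polynomial.eval_mul, Polynomial.eval_C, descPochhammer_eval_eq_descFactorial,
    Nat.descFactorial_eq_factorial_mul_choose, Nat.cast_mul, inv_mul_cancel_left₀]
  exact_mod_cast k.factorial_ne_zero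

theorem natDegree_binomialPoly_le (k : ℕ) : (binomialPoly K k).natDegree ≤ k :=
  (natDegree_C_mul_le _ _).trans (descPochhammer_natDegree K k).le

theorem Polynomial.eq_C_of_natDegree_lt_of_eval_natCast_eq [CharZero K] {p : K[X]} {c : K}
    (s : Finset ℕ) (hdeg : p.natDegree < #s) (heval : ∀ i ∈ s, p.eval (i : K) = c) :
    p = Polynomial.C c := by
  refine eq_of_degree_sub_lt_of_eval_index_eq s Nat.cast_injective.injOn ?_ (by simpa using heval)
  have hsub : (p - Polynomial.C c).natDegree ≤ p.natDegree :=
    (natDegree_sub_le _ _).trans (by simp)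
  exact degree_le_natDegree.trans_lt (by exact_mod_cast hsub.trans_lt hdeg)

variable {α : Type*} [Fintype α] [DecidableEq α]

theorem Finset.card_filter_superset_powersetCard {A : Finset α} {s : ℕ} (hA : #A ≤ s) :
    #{X ∈ powersetCard s (univ : Finset α) | A ⊆ X} = (Fintype.card α - #A).choose (s - #A) := by
  rw [← card_compl, ← card_powersetCard]
  refine card_bij' (fun X _ => X \ A) (fun Z _ => Z ∪ A) (fun X hX => ?_) (fun Z hZ => ?_)
    (fun X hX => ?_) (fun Z hZ => ?_)
  · simp only [mem_filter, mem_powersetCard, subset_univ, true_and] at hX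
    simp [card_sdiff_of_subset hX.2, hX.1, compl_eq_univ_sdiff]
  · rw [mem_powersetCard, subset_compl_iff_disjoint_right] at hZ
    simp [card_union_of_disjoint hZ.1, hZ.2]
    omega
  · exact sdiff_union_of_subset (mem_filter.mp hX).2
  · rw [mem_powersetCard, subset_compl_iff_disjoint_right] at hZ
    exact union_sdiff_cancel_right hZ.1

theorem Finset.sum_powersetCard_indicator_superset [CharZero K] (A : Finset α) (s : ℕ) :
    ∑ X ∈ powersetCard s (univ : Finset α), (if A ⊆ X then 1 else 0 : K)
      = (Fintype.card α).choose s * s.choose #A / (Fintype.card α).choose #A := by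
  have hA : ((Fintype.card α).choose #A : K) ≠ 0 := by
    exact_mod_cast (Nat.choose_pos (card_le_univ A)).ne'
  rw [sum_boole, eq_div_iff hA]
  rcases le_or_gt #A s with hAs | hsA
  · rw [card_filter_superset_powersetCard hAs, mul_comm]
    exact_mod_cast (Nat.choose_mul hAs).symm
  · rw [Nat.choose_eq_zero_of_lt hsA, filter_false_of_mem fun X hX hAX => ?_]
    · simp
    · exact (card_le_card hAX).not_gt (by rw [(mem_powersetCard.mp hX).2]; exact hsA)

end

section Cube

variable {σ α β : Type*}

theorem evalB_mul (z : σ → Bool) (p q : MvPolynomial σ ℝ) :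
    evalB z (p * q) = evalB z p * evalB z q :=
  map_mul _ p q

theorem evalB_eq_sum (z : σ → Bool) (p : MvPolynomial σ ℝ) :
    evalB z p = ∑ e ∈ p.support, p.coeff e * if ∀ i ∈ e.support, z i then 1 else 0 := by
  rw [evalB, MvPolynomial.eval_eq]
  refine sum_congr rfl fun e _ => congrArg _ ?_
  split_ifs with h
  · exact prod_eq_one fun i hi => by simp [h i hi]
  · obtain ⟨i, hi, hzi⟩ := not_forall₂.mp h
    exact prod_eq_zero hi (by simp [hzi, Finsupp.mem_support_iff.mp hi])

def cubePoint [DecidableEq α] [DecidableEq β] (X : Finset α) (Y : Finset β) : α ⊕ β → Bool :=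
  Sum.elim (· ∈ X) (· ∈ Y)

variable [DecidableEq α] [DecidableEq β]

theorem forall_cubePoint_iff (X : Finset α) (Y : Finset β) (B : Finset (α ⊕ β)) :
    (∀ i ∈ B, cubePoint X Y i) ↔ B.toLeft ⊆ X ∧ B.toRight ⊆ Y := by
  simp [cubePoint, subset_iff, Sum.forall]

theorem evalB_cubePoint (X : Finset α) (Y : Finset β) (p : MvPolynomial (α ⊕ β) ℝ) :
    evalB (cubePoint X Y) p = ∑ e ∈ p.support, p.coeff e *
      ((if e.support.toLeft ⊆ X then 1 else 0) * (if e.support.toRight ⊆ Y then 1 else 0)) := by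
  simp only [evalB_eq_sum, forall_cubePoint_iff, ite_zero_mul_ite_zero, mul_one]

theorem exists_eq_cubePoint [Fintype α] [Fintype β] (z : α ⊕ β → Bool) :
    ∃ X Y, z = cubePoint X Y :=
  ⟨({a | z (.inl a)} : Finset α), ({b | z (.inr b)} : Finset β),
    by ext (a | b) <;> simp [cubePoint]⟩

theorem evalB_sum_X_inl [Fintype α] (X : Finset α) (Y : Finset β) :
    evalB (cubePoint X Y) (∑ a : α, MvPolynomial.X (.inl a)) = #X := by
  simp [evalB, cubePoint]

theorem evalB_sum_X_inr [Fintype β] (X : Finset α) (Y : Finset β) :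
    evalB (cubePoint X Y) (∑ b : β, MvPolynomial.X (.inr b)) = #Y := by
  simp [evalB, cubePoint]

end Cube

theorem Finsupp.card_support_le_sum {σ : Type*} (e : σ →₀ ℕ) : #e.support ≤ e.sum fun _ k => k :=
  calc #e.support = ∑ _i ∈ e.support, 1 := card_eq_sum_ones _
    _ ≤ ∑ i ∈ e.support, e i :=
      Finset.sum_le_sum fun _ hi => Nat.one_le_iff_ne_zero.mpr (Finsupp.mem_support_iff.mp hi)

section Slice

variable {α β : Type*} [Fintype α] [Fintype β]

/-- The restriction of `P` to the line `x ↦ (a x, b x)`, where `P(s, t)` is the average of `m` over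
the cube points `cubePoint X Y` with `#X = s`, `#Y = t` (see `sum_evalB_slice_eq`). -/
noncomputable def sliceAverageAlong (m : MvPolynomial (α ⊕ β) ℝ) (a b : ℝ[X]) : ℝ[X] :=
  ∑ e ∈ m.support, Polynomial.C (m.coeff e /
      ((Fintype.card α).choose #e.support.toLeft * (Fintype.card β).choose #e.support.toRight)) *
    ((binomialPoly ℝ #e.support.toLeft).comp a * (binomialPoly ℝ #e.support.toRight).comp b)

theorem natDegree_sliceAverageAlong_le (m : MvPolynomial (α ⊕ β) ℝ) {a b : ℝ[X]}
    (ha : a.natDegree ≤ 1) (hb : b.natDegree ≤ 1) :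
    (sliceAverageAlong m a b).natDegree ≤ m.totalDegree := by
  refine natDegree_sum_le_of_forall_le _ _ fun e he => ?_
  have hcomp (k : ℕ) {c : ℝ[X]} (hc : c.natDegree ≤ 1) :
      ((binomialPoly ℝ k).comp c).natDegree ≤ k :=
    natDegree_comp_le.trans (by nlinarith [natDegree_binomialPoly_le (K := ℝ) k])
  calc _ ≤ #e.support.toLeft + #e.support.toRight := (natDegree_C_mul_le _ _).trans
        (natDegree_mul_le.trans (add_le_add (hcomp _ ha) (hcomp _ hb)))
    _ = #e.support := card_toLeft_add_card_toRight
    _ ≤ m.totalDegree := (Finsupp.card_support_le_sum e).trans (le_totalDegree he)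

theorem eval_sliceAverageAlong_congr (m : MvPolynomial (α ⊕ β) ℝ) {a b a' b' : ℝ[X]} {x x' : ℝ}
    (ha : a.eval x = a'.eval x') (hb : b.eval x = b'.eval x') :
    (sliceAverageAlong m a b).eval x = (sliceAverageAlong m a' b').eval x' := by
  simp only [sliceAverageAlong, eval_finsetSum, Polynomial.eval_mul, Polynomial.eval_C, eval_comp,
    ha, hb]

theorem sum_evalB_slice_eq [DecidableEq α] [DecidableEq β] (m : MvPolynomial (α ⊕ β) ℝ)
    {a b : ℝ[X]} {x : ℝ} {s t : ℕ} (ha : a.eval x = s) (hb : b.eval x = t) :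
    ∑ X ∈ powersetCard s (univ : Finset α), ∑ Y ∈ powersetCard t (univ : Finset β),
        evalB (cubePoint X Y) m
      = (Fintype.card α).choose s * (Fintype.card β).choose t *
          (sliceAverageAlong m a b).eval x := by
  simp only [evalB_cubePoint, sliceAverageAlong, eval_finsetSum, Polynomial.eval_mul,
    Polynomial.eval_C, eval_comp, ha, hb, binomialPoly_eval_natCast, mul_sum]
  simp only [sum_comm (s := powersetCard t univ) (t := m.support),
    sum_comm (s := powersetCard s univ) (t := m.support)]
  refine sum_congr rfl fun e _ => ?_
  calc _ = m.coeff e * ((∑ X ∈ powersetCard s univ, if e.support.toLeft ⊆ X then 1 else 0) *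
        (∑ Y ∈ powersetCard t univ, if e.support.toRight ⊆ Y then 1 else 0)) := by
        rw [sum_comm]
        simp only [mul_sum, sum_mul]
    _ = _ := by
        rw [sum_powersetCard_indicator_superset, sum_powersetCard_indicator_superset]
        ring

end Slice

theorem le_totalDegree_of_slice_values {n : ℕ} (m : MvPolynomial (Fin n ⊕ Fin n) ℝ)
    (hzero : ∀ Y, evalB (cubePoint ∅ Y) m = 0)
    (hone : ∀ X Y, #X + #Y = n + 1 → evalB (cubePoint X Y) m = 1) :
    n ≤ m.totalDegree := by
  by_contra! hdeg
  set ℓ : ℝ[X] := Polynomial.C ((n : ℝ) + 1) - Polynomial.X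
  have hℓ (x : ℝ) : ℓ.eval x = n + 1 - x := by
    rw [Polynomial.eval_sub, Polynomial.eval_C, Polynomial.eval_X]
  have hlt {a b : ℝ[X]} (ha : a.natDegree ≤ 1) (hb : b.natDegree ≤ 1) :
      (sliceAverageAlong m a b).natDegree < n :=
    (natDegree_sliceAverageAlong_le m ha hb).trans_lt hdeg
  have hchoose {k : ℕ} (hk : k ≤ n) : (n.choose k : ℝ) ≠ 0 := by
    exact_mod_cast (Nat.choose_pos hk).ne'
  have hface : sliceAverageAlong m 0 Polynomial.X = Polynomial.C 0 := by
    refine eq_C_of_natDegree_lt_of_eval_natCast_eq (range (n + 1)) ?_ fun t ht => ?_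
    · rw [card_range]
      exact (hlt (natDegree_zero.trans_le zero_le_one) natDegree_X_le).trans n.lt_succ_self
    · have h := sum_evalB_slice_eq m (a := 0) (b := Polynomial.X) (x := t) (s := 0) (t := t)
        (by simp) (by simp)
      simp only [powersetCard_zero, sum_singleton, hzero, sum_const_zero, Fintype.card_fin] at h
      simpa [hchoose (Nat.lt_succ_iff.mp (mem_range.mp ht))] using h.symm
  have hslice : sliceAverageAlong m Polynomial.X ℓ = Polynomial.C 1 := by
    refine eq_C_of_natDegree_lt_of_eval_natCast_eq (Icc 1 n) ?_ fun s hs => ?_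
    · rw [Nat.card_Icc, Nat.add_sub_cancel]
      exact hlt natDegree_X_le
        ((natDegree_sub_le _ _).trans (by rw [natDegree_C, natDegree_X]; omega))
    · obtain ⟨hs1, hsn⟩ := mem_Icc.mp hs
      have h := sum_evalB_slice_eq m (x := s) (s := s) (t := n + 1 - s) Polynomial.eval_X
        (by rw [hℓ, Nat.cast_sub (by omega)]; push_cast; ring)
      rw [sum_congr rfl fun X hX => sum_congr rfl fun Y hY => hone X Y (by
        rw [(mem_powersetCard.mp hX).2, (mem_powersetCard.mp hY).2]; omega)] at h
      simp only [sum_const, card_powersetCard, card_univ, Fintype.card_fin, nsmul_eq_mul,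
        mul_one] at h
      exact (mul_eq_left₀ (mul_ne_zero (hchoose hsn) (hchoose (by omega)))).mp h.symm
  have h := eval_sliceAverageAlong_congr m (x := n + 1) (x' := 0) (a := 0) (b := Polynomial.X)
    (a' := Polynomial.X) (b' := ℓ) (by simp) (by rw [hℓ, Polynomial.eval_X, sub_zero])
  rw [hface, hslice, Polynomial.eval_C, Polynomial.eval_C] at h
  exact zero_ne_one h

theorem MvPolynomial.totalDegree_eq_one_of_le_of_eval_ne {σ R : Type*} [CommSemiring R]
    {p : MvPolynomial σ R} (hle : p.totalDegree ≤ 1) {x y : σ → R}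
    (hne : MvPolynomial.eval x p ≠ MvPolynomial.eval y p) : p.totalDegree = 1 := by
  refine hle.antisymm (Nat.one_le_iff_ne_zero.mpr fun h0 => hne ?_)
  rw [totalDegree_eq_zero_iff_eq_C.mp h0, MvPolynomial.eval_C, MvPolynomial.eval_C]

theorem totalDegree_sum_X_le {σ ι : Type*} (s : Finset ι) (f : ι → σ) :
    (∑ i ∈ s, MvPolynomial.X (f i) : MvPolynomial σ ℝ).totalDegree ≤ 1 :=
  totalDegree_finsetSum_le fun _ _ => (totalDegree_X _).le

section Counterexample

variable {n : ℕ}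

theorem evalB_cubePoint_sum_X_add_sum_X_sub_C (X Y : Finset (Fin n)) (c : ℝ) :
    evalB (cubePoint X Y) ((∑ i : Fin n, MvPolynomial.X (Sum.inl i)) +
      (∑ i : Fin n, MvPolynomial.X (Sum.inr i)) - MvPolynomial.C c) = #X + #Y - c := by
  rw [evalB, map_sub, map_add, MvPolynomial.eval_C, ← evalB, ← evalB, evalB_sum_X_inl,
    evalB_sum_X_inr]

theorem totalDegree_sum_X_inl (hn : 1 ≤ n) :
    (∑ i : Fin n, MvPolynomial.X (Sum.inl i) : MvPolynomial (Fin n ⊕ Fin n) ℝ).totalDegree = 1 := by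
  refine totalDegree_eq_one_of_le_of_eval_ne (totalDegree_sum_X_le _ _)
    (?_ : evalB (cubePoint ∅ ∅) _ ≠ evalB (cubePoint univ univ) _)
  rw [evalB_sum_X_inl, evalB_sum_X_inl, card_empty, card_univ, Fintype.card_fin]
  exact_mod_cast (by omega : 0 ≠ n)

theorem totalDegree_sum_X_add_sum_X_sub_C (hn : 1 ≤ n) :
    ((∑ i : Fin n, MvPolynomial.X (Sum.inl i)) + (∑ i : Fin n, MvPolynomial.X (Sum.inr i)) -
      MvPolynomial.C ((n : ℝ) + 1) : MvPolynomial (Fin n ⊕ Fin n) ℝ).totalDegree = 1 := by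
  refine totalDegree_eq_one_of_le_of_eval_ne ((totalDegree_sub_C_le _ _).trans
      ((totalDegree_add _ _).trans (max_le (totalDegree_sum_X_le _ _) (totalDegree_sum_X_le _ _))))
    (?_ : evalB (cubePoint ∅ ∅) _ ≠ evalB (cubePoint univ univ) _)
  rw [evalB_cubePoint_sum_X_add_sum_X_sub_C, evalB_cubePoint_sum_X_add_sum_X_sub_C, card_empty,
    card_univ, Fintype.card_fin, Nat.cast_zero]
  have : (1 : ℝ) ≤ n := by exact_mod_cast hn
  intro h
  linarith

theorem evalB_sum_X_inl_ne_zero_or (z : Fin n ⊕ Fin n → Bool) :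
    evalB z (∑ i : Fin n, MvPolynomial.X (Sum.inl i)) ≠ 0 ∨
      evalB z ((∑ i : Fin n, MvPolynomial.X (Sum.inl i)) +
        (∑ i : Fin n, MvPolynomial.X (Sum.inr i)) - MvPolynomial.C ((n : ℝ) + 1)) ≠ 0 := by
  obtain ⟨X, Y, rfl⟩ := exists_eq_cubePoint z
  rw [evalB_sum_X_inl, evalB_cubePoint_sum_X_add_sum_X_sub_C, or_iff_not_imp_left, not_not]
  intro hX hXY
  have hY : #Y = n + 1 := by exact_mod_cast (by linarith : (#Y : ℝ) = n + 1)
  exact absurd (card_le_univ Y) (by rw [Fintype.card_fin]; omega)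

end Counterexample

/-- Counterexample construction: with g₁ = X₁+⋯+Xₙ and g₂ = X₁+⋯+Xₙ+Y₁+⋯+Yₙ−(n+1)
(in 2n variables, indexed by Fin n ⊕ Fin n), both of degree 1 and with no common zeros
on {0,1}^{2n}, any h₁, h₂ with h₁g₁ + h₂g₂ = 1 on the cube must have
max(deg(ml(h₁g₁)), deg(ml(h₂g₂))) ≥ n. -/
theorem stmt_14 (n : ℕ) (hn : 1 ≤ n) (g₁ g₂ : MvPolynomial (Fin n ⊕ Fin n) ℝ)
    (hg₁ : g₁ = ∑ i : Fin n, MvPolynomial.X (Sum.inl i))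
    (hg₂ : g₂ = (∑ i : Fin n, MvPolynomial.X (Sum.inl i)) +
      (∑ i : Fin n, MvPolynomial.X (Sum.inr i)) - MvPolynomial.C ((n : ℝ) + 1)) :
    g₁.totalDegree = 1 ∧ g₂.totalDegree = 1 ∧
    (∀ z : Fin n ⊕ Fin n → Bool, evalB z g₁ ≠ 0 ∨ evalB z g₂ ≠ 0) ∧
    ∀ h₁ h₂ : MvPolynomial (Fin n ⊕ Fin n) ℝ,
      (∀ z : Fin n ⊕ Fin n → Bool, evalB z h₁ * evalB z g₁ + evalB z h₂ * evalB z g₂ = 1) →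
      ∀ m₁ m₂ : MvPolynomial (Fin n ⊕ Fin n) ℝ, Multilinear m₁ → Multilinear m₂ →
        (∀ z : Fin n ⊕ Fin n → Bool, evalB z m₁ = evalB z (h₁ * g₁)) →
        (∀ z : Fin n ⊕ Fin n → Bool, evalB z m₂ = evalB z (h₂ * g₂)) →
        n ≤ max m₁.totalDegree m₂.totalDegree := by
  subst hg₁ hg₂
  refine ⟨totalDegree_sum_X_inl hn, totalDegree_sum_X_add_sum_X_sub_C hn,
    evalB_sum_X_inl_ne_zero_or, fun h₁ h₂ hcert m₁ m₂ _ _ hm₁ _ => ?_⟩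
  refine le_max_of_le_left (le_totalDegree_of_slice_values m₁ (fun Y => ?_) fun X Y hXY => ?_)
  · rw [hm₁, evalB_mul, evalB_sum_X_inl, card_empty, Nat.cast_zero, mul_zero]
  · have h := hcert (cubePoint X Y)
    rwa [evalB_cubePoint_sum_X_add_sum_X_sub_C, ← Nat.cast_add, hXY, Nat.cast_add, Nat.cast_one,
      sub_self, mul_zero, add_zero, ← evalB_mul, ← hm₁] at h
end
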